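/- Let (N,V) be a triangle-free instance of 3D-SR-SAS-BIN, let α_i ∈ N, and let M be a stable P-matching in the sub-instance induced on N ∖ {α_i}. Suppose that: (i) there exist no distinct α_{l1}, α_{l2} ∈ N ∖ {α_i} with u_{α_{l1}}(M) = u_{α_{l2}}(M) = 0 and val_{α_i}(α_{l1}) = val_{α_i}(α_{l2}) = 1; (ii) there exist no distinct α_{l3}, α_{l4} ∈ N ∖ {α_i} with u_{α_{l3}}(M) = u_{α_{l4}}(M) = 0, val_{α_i}(α_{l3}) = 1 and val_{α_{l3}}(α_{l4}) = 1; and (iii) there exist no distinct α_{l5}, α_{l6} ∈ N ∖ {α_i} with u_{α_{l5}}(M) = 1, u_{α_{l6}}(M) = 0, val_{α_i}(α_{l5}) = 1 and val_{α_{l5}}(α_{l6}) = 1. Then M is a stable P-matching in (N,V). -/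

import Mathlib

open Finset

variable {A : Type*}

/-- `M` is a matching on agent set `N`: a set of pairwise disjoint triples of agents of `N`. -/
def IsMatching [DecidableEq A] (N : Finset A) (M : Finset (Finset A)) : Prop :=
  (∀ t ∈ M, t.card = 3 ∧ t ⊆ N) ∧ ∀ t ∈ M, ∀ s ∈ M, t ≠ s → Disjoint t s

/-- The (additively separable) utility of agent `a` in matching `M` under valuations `val`:
the sum, over the triples of `M` containing `a`, of the valuations by `a` of the other
members; this is `0` if `a` is unmatched, and for a genuine matching it is the sum of the
valuations of `a`'s two partners. -/
def utility [DecidableEq A] (val : A → A → ℤ) (M : Finset (Finset A)) (a : A) : ℤ :=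
  ∑ t ∈ M.filter (fun t => a ∈ t), ∑ b ∈ t.erase a, val a b

/-- The triple consisting of the three distinct agents `x, y, z` of `N` blocks `M`. -/
def Blocks [DecidableEq A] (N : Finset A) (val : A → A → ℤ) (M : Finset (Finset A))
    (x y z : A) : Prop :=
  x ∈ N ∧ y ∈ N ∧ z ∈ N ∧ x ≠ y ∧ x ≠ z ∧ y ≠ z ∧
  utility val M x < val x y + val x z ∧
  utility val M y < val y x + val y z ∧
  utility val M z < val z x + val z y

/-- `M` is stable: no triple of agents of `N` blocks it. -/
def IsStable [DecidableEq A] (N : Finset A) (val : A → A → ℤ) (M : Finset (Finset A)) : Prop :=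
  ∀ x y z : A, ¬ Blocks N val M x y z

/-- Binary symmetric preferences on `N`. -/
def BinSym [DecidableEq A] (N : Finset A) (val : A → A → ℤ) : Prop :=
  (∀ a ∈ N, ∀ b ∈ N, a ≠ b → val a b = 0 ∨ val a b = 1) ∧
  (∀ a ∈ N, ∀ b ∈ N, val a b = val b a)

/-- A `P`-matching: a matching in which every matched agent has strictly positive utility. -/
def IsPMatching [DecidableEq A] (N : Finset A) (val : A → A → ℤ)
    (M : Finset (Finset A)) : Prop :=
  IsMatching N M ∧ ∀ a : A, (∃ t ∈ M, a ∈ t) → 0 < utility val M a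

/-- `x, y, z` form a triangle: three distinct agents of `N` whose pairwise valuations
all equal `1`. -/
def IsTriangle [DecidableEq A] (N : Finset A) (val : A → A → ℤ) (x y z : A) : Prop :=
  x ∈ N ∧ y ∈ N ∧ z ∈ N ∧ x ≠ y ∧ x ≠ z ∧ y ≠ z ∧
  val x y = 1 ∧ val y z = 1 ∧ val x z = 1

/-- The instance contains no triangle. -/
def TriangleFree [DecidableEq A] (N : Finset A) (val : A → A → ℤ) : Prop :=
  ∀ x y z : A, ¬ IsTriangle N val x y z

/-!
Since `i` is unmatched, a triple blocking `M` in `N` but not in `N \ {i}` has the form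
`{i, a, b}` with, say, `val i a = 1`. If also `val i b = 1`, triangle-freeness gives
`val a b = 0`, so both `a` and `b` are unmatched: configuration (i). Otherwise `b` must value
`a` and be unmatched, while `a` has utility `0` or `1`: configurations (ii) and (iii).
-/

section

variable [DecidableEq A] {N : Finset A} {val : A → A → ℤ} {M : Finset (Finset A)}

theorem utility_eq_zero_of_forall_notMem {a : A} (h : ∀ t ∈ M, a ∉ t) :
    utility val M a = 0 := by
  rw [utility, filter_false_of_mem h, sum_empty]

theorem IsMatching.utility_eq_zero_of_notMem (hM : IsMatching N M) {a : A} (ha : a ∉ N) :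
    utility val M a = 0 :=
  utility_eq_zero_of_forall_notMem fun t ht hat => ha ((hM.1 t ht).2 hat)

theorem IsMatching.mono {N' : Finset A} (hM : IsMatching N M) (h : N ⊆ N') : IsMatching N' M :=
  ⟨fun t ht => ⟨(hM.1 t ht).1, (hM.1 t ht).2.trans h⟩, hM.2⟩

theorem IsPMatching.mono {N' : Finset A} (hM : IsPMatching N val M) (h : N ⊆ N') :
    IsPMatching N' val M :=
  ⟨hM.1.mono h, hM.2⟩

theorem IsPMatching.utility_nonneg (hM : IsPMatching N val M) (a : A) :
    0 ≤ utility val M a := by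
  by_cases h : ∃ t ∈ M, a ∈ t
  · exact (hM.2 a h).le
  · push Not at h
    exact (utility_eq_zero_of_forall_notMem h).ge

theorem Blocks.swap_left {x y z : A} (h : Blocks N val M x y z) : Blocks N val M y x z := by
  obtain ⟨hx, hy, hz, hxy, hxz, hyz, hux, huy, huz⟩ := h
  exact ⟨hy, hx, hz, hxy.symm, hyz, hxz, huy, hux, by rwa [add_comm]⟩

theorem Blocks.swap_right {x y z : A} (h : Blocks N val M x y z) : Blocks N val M x z y := by
  obtain ⟨hx, hy, hz, hxy, hxz, hyz, hux, huy, huz⟩ := h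
  exact ⟨hx, hz, hy, hxz, hxy, hyz.symm, by rwa [add_comm], huz, huy⟩

theorem IsStable.of_erase {i : A} (hst : IsStable (N.erase i) val M)
    (hi : ∀ y z, ¬ Blocks N val M i y z) : IsStable N val M := by
  intro x y z hb
  by_cases hx : x = i
  · exact hi y z (hx ▸ hb)
  by_cases hy : y = i
  · exact hi x z (hy ▸ hb.swap_left)
  by_cases hz : z = i
  · exact hi x y (hz ▸ hb.swap_right.swap_left)
  obtain ⟨hxN, hyN, hzN, hrest⟩ := hb
  exact hst x y z ⟨mem_erase.2 ⟨hx, hxN⟩, mem_erase.2 ⟨hy, hyN⟩, mem_erase.2 ⟨hz, hzN⟩, hrest⟩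

theorem Blocks.val_eq_one_or_val_eq_one {i a b : A} (hbs : BinSym N val)
    (hb : Blocks N val M i a b) (hui : utility val M i = 0) : val i a = 1 ∨ val i b = 1 := by
  obtain ⟨hi, ha, hb, hia, hib, -, hu, -⟩ := hb
  rcases hbs.1 i hi a ha hia with h | h <;> rcases hbs.1 i hi b hb hib with h' | h' <;> omega

theorem Blocks.configuration {i a b : A} (hbs : BinSym N val) (htf : TriangleFree N val)
    (hnn : ∀ c, 0 ≤ utility val M c) (hb : Blocks N val M i a b) (hia : val i a = 1) :
    (val i b = 1 ∧ utility val M a = 0 ∧ utility val M b = 0) ∨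
      (val a b = 1 ∧ utility val M b = 0 ∧ (utility val M a = 0 ∨ utility val M a = 1)) := by
  obtain ⟨hi, ha, hb, hne_ia, hne_ib, hne_ab, -, hua, hub⟩ := hb
  rw [← hbs.2 i hi a ha, hia] at hua
  rw [← hbs.2 i hi b hb, hbs.2 b hb a ha] at hub
  have hua0 := hnn a
  have hub0 := hnn b
  rcases hbs.1 i hi b hb hne_ib with hib | hib
  · have hab := hbs.1 a ha b hb hne_ab
    right
    omega
  · have hab : val a b = 0 := (hbs.1 a ha b hb hne_ab).resolve_right fun hab =>
      htf i a b ⟨hi, ha, hb, hne_ia, hne_ib, hne_ab, hia, hab, hib⟩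
    left
    omega

end

theorem stable_pmatching_extends_general [DecidableEq A]
    (N : Finset A) (val : A → A → ℤ)
    (hbs : BinSym N val) (htf : TriangleFree N val)
    (i : A) (M : Finset (Finset A))
    (hM : IsPMatching (N.erase i) val M) (hMst : IsStable (N.erase i) val M)
    (h1 : ¬ ∃ l1 ∈ N.erase i, ∃ l2 ∈ N.erase i, l1 ≠ l2 ∧
      utility val M l1 = 0 ∧ utility val M l2 = 0 ∧ val i l1 = 1 ∧ val i l2 = 1)
    (h2 : ¬ ∃ l3 ∈ N.erase i, ∃ l4 ∈ N.erase i, l3 ≠ l4 ∧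
      utility val M l3 = 0 ∧ utility val M l4 = 0 ∧ val i l3 = 1 ∧ val l3 l4 = 1)
    (h3 : ¬ ∃ l5 ∈ N.erase i, ∃ l6 ∈ N.erase i, l5 ≠ l6 ∧
      utility val M l5 = 1 ∧ utility val M l6 = 0 ∧ val i l5 = 1 ∧ val l5 l6 = 1) :
    IsPMatching N val M ∧ IsStable N val M := by
  have hui : utility val M i = 0 := hM.1.utility_eq_zero_of_notMem (notMem_erase i N)
  refine ⟨hM.mono (erase_subset i N), hMst.of_erase fun a b hab => ?_⟩
  wlog hia : val i a = 1 generalizing a b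
  · exact this b a hab.swap_right ((hab.val_eq_one_or_val_eq_one hbs hui).resolve_left hia)
  have hconf := hab.configuration hbs htf hM.utility_nonneg hia
  obtain ⟨-, haN, hbN, hne_ia, hne_ib, hne_ab, -⟩ := hab
  have ha : a ∈ N.erase i := mem_erase.2 ⟨hne_ia.symm, haN⟩
  have hb : b ∈ N.erase i := mem_erase.2 ⟨hne_ib.symm, hbN⟩
  rcases hconf with ⟨hib, hua, hub⟩ | ⟨hvab, hub, hua | hua⟩
  · exact h1 ⟨a, ha, b, hb, hne_ab, hua, hub, hia, hib⟩
  · exact h2 ⟨a, ha, b, hb, hne_ab, hua, hub, hia, hvab⟩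
  · exact h3 ⟨a, ha, b, hb, hne_ab, hua, hub, hia, hvab⟩

/-- Last branch of algorithm `findStableInTriangleFree`: if `M` is a stable `P`-matching
on `N \ {i}` and none of the three configurations of agents described in the algorithm
exists, then `M` itself is a stable `P`-matching on `N`. -/
theorem stable_pmatching_extends [DecidableEq A]
    (N : Finset A) (val : A → A → ℤ)
    (hbs : BinSym N val) (htf : TriangleFree N val)
    (i : A) (hi : i ∈ N) (M : Finset (Finset A))
    (hM : IsPMatching (N.erase i) val M) (hMst : IsStable (N.erase i) val M)
    (h1 : ¬ ∃ l1 ∈ N.erase i, ∃ l2 ∈ N.erase i, l1 ≠ l2 ∧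
      utility val M l1 = 0 ∧ utility val M l2 = 0 ∧ val i l1 = 1 ∧ val i l2 = 1)
    (h2 : ¬ ∃ l3 ∈ N.erase i, ∃ l4 ∈ N.erase i, l3 ≠ l4 ∧
      utility val M l3 = 0 ∧ utility val M l4 = 0 ∧ val i l3 = 1 ∧ val l3 l4 = 1)
    (h3 : ¬ ∃ l5 ∈ N.erase i, ∃ l6 ∈ N.erase i, l5 ≠ l6 ∧
      utility val M l5 = 1 ∧ utility val M l6 = 0 ∧ val i l5 = 1 ∧ val l5 l6 = 1) :
    IsPMatching N val M ∧ IsStable N val M :=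
  stable_pmatching_extends_general N val hbs htf i M hM hMst h1 h2 h3
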